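/- (Dominating Option, part (iii)) Let G=(V,E_L,E_R) be an achievement positional game and let u,v∈V be such that {u},{v}∉E_L∪E_R and, for every edge e∈E_L∪E_R, u∈e implies v∈e. Then o(G_u^v) ≤_L o(G) ≤_L o(G_v^u). -/

import Mathlib

namespace APG

/-- The two players: Left and Right. -/
inductive Player : Type
  | L : Player
  | R : Player
deriving DecidableEq, Repr

/-- The opponent of a player. -/
def Player.other : Player → Player
  | .L => .R
  | .R => .L

/-- An achievement positional game: a finite vertex set together with the set of
blue edges (Left's winning sets) and the set of red edges (Right's winning sets). -/
structure Game : Type where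
  V : Finset ℕ
  EL : Finset (Finset ℕ)
  ER : Finset (Finset ℕ)

/-- The edges are nonempty subsets of the vertex set. -/
def WellFormed (G : Game) : Prop :=
  (∀ e ∈ G.EL, e ⊆ G.V ∧ e.Nonempty) ∧ (∀ e ∈ G.ER, e ⊆ G.V ∧ e.Nonempty)

/-- The winning sets of a given player. -/
def Game.edges (G : Game) : Player → Finset (Finset ℕ)
  | .L => G.EL
  | .R => G.ER

/-- The player who makes the `i`-th move (0-indexed) when `s` moves first. -/
def mover (s : Player) (i : ℕ) : Player := if i % 2 = 0 then s else s.other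

/-- The set of vertices picked by player `p` along the history `h`
(the chronological list of the moves played so far), when `s` moved first. -/
def picked (s p : Player) (h : List ℕ) : Finset ℕ :=
  ((Finset.range h.length).filter fun i => mover s i = p).image fun i => h.getD i 0

/-- The set `S` of picked vertices fills some edge of `E`. -/
def fills (E : Finset (Finset ℕ)) (S : Finset ℕ) : Prop := ∃ e ∈ E, e ⊆ S

/-- The game is over: some player has picked all the vertices of one of their edges. -/
def ended (G : Game) (s : Player) (h : List ℕ) : Prop :=
  fills G.EL (picked s .L h) ∨ fills G.ER (picked s .R h)

/-- `h` is a legal history: no vertex is picked twice, every picked vertex belongs to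
the board, and no move is made after the game has ended. -/
def ValidHist (G : Game) (s : Player) (h : List ℕ) : Prop :=
  h.Nodup ∧ (∀ x ∈ h, x ∈ G.V) ∧ ∀ k, k < h.length → ¬ ended G s (h.take k)

/-- A strategy: a map assigning to each position (history) a vertex to pick. -/
abbrev Strategy := List ℕ → ℕ

/-- Along `h`, every move of player `p` agrees with the strategy `σ`. -/
def Follows (s p : Player) (σ : Strategy) (h : List ℕ) : Prop :=
  ∀ k, k < h.length → mover s k = p → h.getD k 0 = σ (h.take k)

/-- A finished play: either the game has ended or all vertices have been picked. -/
def Complete (G : Game) (s : Player) (h : List ℕ) : Prop :=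
  ended G s h ∨ h.length = G.V.card

/-- The strategy `σ` of player `p` always suggests a legal move (an unpicked vertex)
whenever the game is not over and it is `p`'s turn. -/
def Legal (G : Game) (s p : Player) (σ : Strategy) : Prop :=
  ∀ h, ValidHist G s h → Follows s p σ h → ¬ ended G s h → h.length < G.V.card →
    mover s h.length = p → σ h ∈ G.V ∧ σ h ∉ h

/-- Player `p` has a winning strategy on `G` when `s` moves first: following it,
every finished play ends with `p` having filled one of their edges (and, the game
having ended right there, the opponent has not filled an edge first). -/
def WinsAs (G : Game) (s p : Player) : Prop :=
  ∃ σ : Strategy, Legal G s p σ ∧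
    ∀ h, ValidHist G s h → Follows s p σ h → Complete G s h →
      fills (G.edges p) (picked s p h)

/-- Player `p` has a non-losing strategy on `G` when `s` moves first: following it,
the opponent never fills one of their edges. -/
def NonLosingAs (G : Game) (s p : Player) : Prop :=
  ∃ σ : Strategy, Legal G s p σ ∧
    ∀ h, ValidHist G s h → Follows s p σ h → Complete G s h →
      ¬ fills (G.edges p.other) (picked s p.other h)

/-- The possible results of the game, for a fixed starting player. -/
inductive Result : Type
  | Lwin : Result
  | draw : Result
  | Rwin : Result
deriving DecidableEq, Repr

/-- The result of `G` with optimal play, when `s` moves first, is `r`: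
a win for a player means that player has a winning strategy, a draw means
both players have non-losing strategies. -/
def resultIs (G : Game) (s : Player) : Result → Prop
  | .Lwin => WinsAs G s .L
  | .Rwin => WinsAs G s .R
  | .draw => NonLosingAs G s .L ∧ NonLosingAs G s .R

/-- An outcome: the pair of results with optimal play
(when Left starts, when Right starts). -/
abbrev Outcome := Result × Result

/-- `G` has outcome `o`. -/
def hasOutcome (G : Game) (o : Outcome) : Prop :=
  resultIs G .L o.1 ∧ resultIs G .R o.2

/-- Numerical value of a result, from Left's point of view:
Right wins < draw < Left wins. -/
def Result.val : Result → ℕ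
  | .Rwin => 0
  | .draw => 1
  | .Lwin => 2

/-- The partial order `≤_L` on outcomes, comparing both components simultaneously
from Left's point of view. -/
def outLE (o o' : Outcome) : Prop := o.1.val ≤ o'.1.val ∧ o.2.val ≤ o'.2.val

def oL : Outcome := (.Lwin, .Lwin)
def oLminus : Outcome := (.Lwin, .draw)
def oN : Outcome := (.Lwin, .Rwin)
def oD : Outcome := (.draw, .draw)
def oRminus : Outcome := (.draw, .Rwin)
def oR : Outcome := (.Rwin, .Rwin)

/-- The updated game `G_u` after Left has picked `u`. -/
def subL (G : Game) (u : ℕ) : Game where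
  V := G.V.erase u
  EL := G.EL.image fun e => e.erase u
  ER := G.ER.filter fun e => u ∉ e

/-- The updated game `G^u` after Right has picked `u`. -/
def subR (G : Game) (u : ℕ) : Game where
  V := G.V.erase u
  EL := G.EL.filter fun e => u ∉ e
  ER := G.ER.image fun e => e.erase u

/-- The updated game `G_u^v` after Left has picked `u` and Right has picked `v`. -/
def updLR (G : Game) (u v : ℕ) : Game where
  V := (G.V.erase u).erase v
  EL := (G.EL.filter fun e => v ∉ e).image fun e => e.erase u
  ER := (G.ER.filter fun e => u ∉ e).image fun e => e.erase v

/-- The disjoint union of two games. -/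
def gunion (G G' : Game) : Game where
  V := G.V ∪ G'.V
  EL := G.EL ∪ G'.EL
  ER := G.ER ∪ G'.ER

/-!
Strategies lift along a pairing on `{u, v}`. A player `p` with a strategy `τ` on the game in
which `p` already owns `u` and the opponent owns `v` (`G_u^v` for Left, `G_v^u` for Right) plays
on `G` as follows: when the opponent takes one of `u`, `v`, answer with the other; when nothing
outside `{u, v}` is left, take `u`; otherwise play `τ` on the history with `u` and `v` deleted.
Since `u` and `v` are taken in consecutive pairs, the deleted history is a play of the reduced
game with the same turn order. Every edge of `p` in the reduced game avoids `v`, hence `u`, and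
is an edge of `G`. The opponent never owns both `u` and `v`; as every edge through `u` contains
`v`, an opponent edge `e` filled in `G` avoids `u`, so `e \ {v}` is an opponent edge of the
reduced game filled there. Thus winning and non-losing strategies of Left on `G_u^v`, and of
Right on `G_v^u`, give the same on `G`, which yields both inequalities.
-/

lemma Player.other_ne (p : Player) : p.other ≠ p := by cases p <;> decide

lemma Player.other_other (p : Player) : p.other.other = p := by cases p <;> rfl

lemma Player.eq_or_eq_other (q p : Player) : q = p ∨ q = p.other := by
  cases q <;> cases p <;> decide

lemma mover_succ (s : Player) (i : ℕ) : mover s (i + 1) = (mover s i).other := by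
  rcases Nat.mod_two_eq_zero_or_one i with h | h <;>
    simp [mover, h, Nat.add_mod, Player.other_other]

lemma mover_add_two (s : Player) (i : ℕ) : mover s (i + 2) = mover s i := by
  rw [mover_succ, mover_succ, Player.other_other]

lemma mover_concat_length {s p : Player} {h : List ℕ} (x : ℕ) (hm : mover s h.length = p.other) :
    mover s (h ++ [x]).length = p := by
  rw [List.length_append, List.length_singleton, mover_succ, hm, Player.other_other]

section Picked

variable {s p q : Player} {h : List ℕ} {x : ℕ}

@[simp] lemma picked_nil (s p : Player) : picked s p [] = ∅ := by simp [picked]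

lemma picked_concat (s p : Player) (h : List ℕ) (x : ℕ) :
    picked s p (h ++ [x]) =
      if mover s h.length = p then insert x (picked s p h) else picked s p h := by
  have hprefix : ∀ i ∈ (Finset.range h.length).filter (fun i => mover s i = p),
      (h ++ [x]).getD i 0 = h.getD i 0 := fun i hi =>
    List.getD_append _ _ _ _ (Finset.mem_range.mp (Finset.mem_filter.mp hi).1)
  have hlast : (h ++ [x]).getD h.length 0 = x := by simp
  unfold picked
  rw [List.length_append, List.length_singleton, Finset.range_add_one, Finset.filter_insert]
  split_ifs
  · rw [Finset.image_insert, Finset.image_congr hprefix, hlast]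
  · rw [Finset.image_congr hprefix]

lemma mem_of_mem_picked (hx : x ∈ picked s p h) : x ∈ h := by
  obtain ⟨i, hi, rfl⟩ := Finset.mem_image.mp hx
  have hi := Finset.mem_range.mp (Finset.mem_filter.mp hi).1
  rw [List.getD_eq_getElem _ _ hi]
  exact List.getElem_mem hi

lemma picked_subset_concat (s p : Player) (h : List ℕ) (x : ℕ) :
    picked s p h ⊆ picked s p (h ++ [x]) := by
  rw [picked_concat]
  split_ifs
  exacts [Finset.subset_insert _ _, subset_rfl]

lemma mem_picked_concat_self (hm : mover s h.length = p) : x ∈ picked s p (h ++ [x]) := by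
  rw [picked_concat, if_pos hm]
  exact Finset.mem_insert_self _ _

lemma picked_disjoint (hnd : h.Nodup) (hpq : p ≠ q) : Disjoint (picked s p h) (picked s q h) := by
  refine Finset.disjoint_left.mpr fun y hyp hyq => ?_
  simp only [picked, Finset.mem_image, Finset.mem_filter, Finset.mem_range] at hyp hyq
  obtain ⟨i, ⟨hi, rfl⟩, hxi⟩ := hyp
  obtain ⟨j, ⟨hj, rfl⟩, hxj⟩ := hyq
  rw [List.getD_eq_getElem _ _ hi] at hxi
  rw [List.getD_eq_getElem _ _ hj] at hxj
  have hij : i = j := (hnd.getElem_inj_iff).mp (hxi.trans hxj.symm)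
  exact hpq (congrArg (mover s) hij)

end Picked

lemma fills.mono {E E' : Finset (Finset ℕ)} {S S' : Finset ℕ}
    (hE : E ⊆ E') (hS : S ⊆ S') (h : fills E S) : fills E' S' := by
  obtain ⟨e, he, hes⟩ := h
  exact ⟨e, hE he, hes.trans hS⟩

lemma ended_iff (G : Game) (s : Player) (h : List ℕ) (p : Player) :
    ended G s h ↔ fills (G.edges p) (picked s p h) ∨
      fills (G.edges p.other) (picked s p.other h) := by
  cases p <;> simp [ended, Game.edges, Player.other, or_comm]

lemma WellFormed.edges {G : Game} (hG : WellFormed G) (p : Player) :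
    ∀ e ∈ G.edges p, e ⊆ G.V ∧ e.Nonempty := by
  cases p
  exacts [hG.1, hG.2]

section Histories

variable {G : Game} {s p : Player} {σ : Strategy} {h : List ℕ} {x : ℕ}

lemma validHist_nil (G : Game) (s : Player) : ValidHist G s [] :=
  ⟨List.nodup_nil, by simp, by simp⟩

lemma ValidHist.length_le (hval : ValidHist G s h) : h.length ≤ G.V.card := by
  rw [← List.toFinset_card_of_nodup hval.1]
  exact Finset.card_le_card fun y hy => hval.2.1 y (List.mem_toFinset.mp hy)

lemma ValidHist.length_lt {w : ℕ} (hval : ValidHist G s h) (hwV : w ∈ G.V) (hwh : w ∉ h) :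
    h.length < G.V.card := by
  rw [← List.toFinset_card_of_nodup hval.1]
  refine Finset.card_lt_card ⟨fun y hy => hval.2.1 y (List.mem_toFinset.mp hy), fun hsub => ?_⟩
  exact hwh (List.mem_toFinset.mp (hsub hwV))

lemma ValidHist.toFinset_eq (hval : ValidHist G s h) (hlen : h.length = G.V.card) :
    h.toFinset = G.V :=
  Finset.eq_of_subset_of_card_le (fun y hy => hval.2.1 y (List.mem_toFinset.mp hy))
    (by rw [List.toFinset_card_of_nodup hval.1, hlen])

lemma ValidHist.of_concat (hval : ValidHist G s (h ++ [x])) : ValidHist G s h := by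
  obtain ⟨hnd, hmem, hend⟩ := hval
  refine ⟨(List.sublist_append_left h [x]).nodup hnd, fun y hy => hmem y (by simp [hy]),
    fun k hk => ?_⟩
  have := hend k (by simp; omega)
  rwa [List.take_append_of_le_length hk.le] at this

lemma ValidHist.not_ended_of_concat (hval : ValidHist G s (h ++ [x])) : ¬ ended G s h := by
  have := hval.2.2 h.length (by simp)
  rwa [List.take_append_of_le_length le_rfl, List.take_length] at this

lemma ValidHist.mem_of_concat (hval : ValidHist G s (h ++ [x])) : x ∈ G.V ∧ x ∉ h :=
  ⟨hval.2.1 x (by simp), fun hx => (List.nodup_append.mp hval.1).2.2 x hx x (by simp) rfl⟩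

lemma ValidHist.concat (hval : ValidHist G s h) (hnend : ¬ ended G s h) (hxV : x ∈ G.V)
    (hxh : x ∉ h) : ValidHist G s (h ++ [x]) := by
  obtain ⟨hnd, hmem, hend⟩ := hval
  refine ⟨hnd.append (List.nodup_singleton x) (by simpa using hxh), ?_, fun k hk => ?_⟩
  · simpa [or_imp, forall_and] using ⟨hmem, hxV⟩
  · rcases Nat.lt_or_ge k h.length with hk' | hk'
    · rw [List.take_append_of_le_length hk'.le]
      exact hend k hk'
    · obtain rfl : k = h.length := by simp at hk; omega
      rwa [List.take_append_of_le_length le_rfl, List.take_length]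

lemma follows_nil (s p : Player) (σ : Strategy) : Follows s p σ [] := fun _ hk => by simp at hk

lemma Follows.of_concat (hf : Follows s p σ (h ++ [x])) : Follows s p σ h := by
  intro k hk hm
  have := hf k (by simp; omega) hm
  rwa [List.getD_append _ _ _ _ hk, List.take_append_of_le_length hk.le] at this

lemma Follows.eq_of_concat (hf : Follows s p σ (h ++ [x])) (hm : mover s h.length = p) :
    x = σ h := by
  simpa using hf h.length (by simp) hm

lemma Follows.concat (hf : Follows s p σ h) (hx : mover s h.length = p → x = σ h) :
    Follows s p σ (h ++ [x]) := by
  intro k hk hm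
  rcases Nat.lt_or_ge k h.length with hk' | hk'
  · rw [List.getD_append _ _ _ _ hk', List.take_append_of_le_length hk'.le]
    exact hf k hk' hm
  · obtain rfl : k = h.length := by simp at hk; omega
    simpa using hx hm

lemma ValidHist.not_fills_both (hG : WellFormed G) (hval : ValidHist G s h) (p : Player) :
    ¬ (fills (G.edges p) (picked s p h) ∧ fills (G.edges p.other) (picked s p.other h)) := by
  rintro ⟨hp, hq⟩
  rcases List.eq_nil_or_concat h with rfl | ⟨h₀, y, rfl⟩
  · obtain ⟨e, he, hes⟩ := hp
    rw [picked_nil, Finset.subset_empty] at hes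
    exact (hG.edges p e he).2.ne_empty hes
  -- the player who did not make the last move had already filled an edge before it
  rw [List.concat_eq_append] at hval hp hq
  have hearlier : ∀ r, r ≠ mover s h₀.length → fills (G.edges r) (picked s r (h₀ ++ [y])) →
      ended G s h₀ := fun r hr hf => by
    rw [picked_concat, if_neg (Ne.symm hr)] at hf
    exact (ended_iff G s h₀ r).mpr (Or.inl hf)
  refine hval.not_ended_of_concat ?_
  rcases Player.eq_or_eq_other (mover s h₀.length) p with hm | hm
  · exact hearlier p.other (hm ▸ Player.other_ne _) hq
  · exact hearlier p (fun hc => Player.other_ne p (hc.trans hm).symm) hp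

end Histories

section Strategies

variable {G H : Game} {s p : Player} {σ σ' : Strategy}

def IsWinning (G : Game) (s p : Player) (σ : Strategy) : Prop :=
  Legal G s p σ ∧ ∀ h, ValidHist G s h → Follows s p σ h → Complete G s h →
    fills (G.edges p) (picked s p h)

def IsNonLosing (G : Game) (s p : Player) (σ : Strategy) : Prop :=
  Legal G s p σ ∧ ∀ h, ValidHist G s h → Follows s p σ h → Complete G s h →
    ¬ fills (G.edges p.other) (picked s p.other h)

lemma IsWinning.isNonLosing (hG : WellFormed G) (hσ : IsWinning G s p σ) :
    IsNonLosing G s p σ :=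
  ⟨hσ.1, fun h hval hf hc hfill => hval.not_fills_both hG p ⟨hσ.2 h hval hf hc, hfill⟩⟩

lemma WinsAs.nonLosingAs (hG : WellFormed G) (hw : WinsAs G s p) : NonLosingAs G s p :=
  hw.imp fun _ => IsWinning.isNonLosing hG

lemma exists_complete_play (hσ : Legal G s p σ) (hσ' : Legal G s p.other σ') :
    ∃ h, ValidHist G s h ∧ Follows s p σ h ∧ Follows s p.other σ' h ∧ Complete G s h := by
  suffices ∀ n h, G.V.card - h.length ≤ n → ValidHist G s h → Follows s p σ h →
      Follows s p.other σ' h →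
      ∃ h', ValidHist G s h' ∧ Follows s p σ h' ∧ Follows s p.other σ' h' ∧ Complete G s h' from
    this _ [] le_rfl (validHist_nil G s) (follows_nil s p σ) (follows_nil s p.other σ')
  intro n
  induction n with
  | zero =>
    intro h hn hval hf hf'
    exact ⟨h, hval, hf, hf', Or.inr (le_antisymm hval.length_le (by omega))⟩
  | succ n ih =>
    intro h hn hval hf hf'
    by_cases hc : Complete G s h
    · exact ⟨h, hval, hf, hf', hc⟩
    have hnend : ¬ ended G s h := fun he => hc (Or.inl he)
    have hlt : h.length < G.V.card := lt_of_le_of_ne hval.length_le fun he => hc (Or.inr he)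
    set x := if mover s h.length = p then σ h else σ' h with hx
    have hmove : x ∈ G.V ∧ x ∉ h := by
      rcases Player.eq_or_eq_other (mover s h.length) p with hm | hm
      · rw [hx, if_pos hm]
        exact hσ h hval hf hnend hlt hm
      · rw [hx, if_neg (hm ▸ Player.other_ne p)]
        exact hσ' h hval hf' hnend hlt hm
    refine ih (h ++ [x]) (by simp; omega) (hval.concat hnend hmove.1 hmove.2)
      (hf.concat fun hm => by rw [hx, if_pos hm]) (hf'.concat fun hm => ?_)
    rw [hx, if_neg (hm ▸ Player.other_ne p)]

lemma WinsAs.not_nonLosingAs_other (hw : WinsAs G s p) : ¬ NonLosingAs G s p.other := by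
  rintro ⟨σ', hleg', hsafe'⟩
  obtain ⟨σ, hleg, hwin⟩ := hw
  obtain ⟨h, hval, hf, hf', hc⟩ := exists_complete_play hleg hleg'
  exact hsafe' h hval hf' hc (by simpa [Player.other_other] using hwin h hval hf hc)

lemma Result.val_le_of_lifts_L (hG : WellFormed G) (hW : WinsAs H s .L → WinsAs G s .L)
    (hN : NonLosingAs H s .L → NonLosingAs G s .L) {r r' : Result}
    (hr : resultIs H s r) (hr' : resultIs G s r') : r.val ≤ r'.val := by
  cases r <;> cases r' <;> simp only [Result.val] <;> (try omega) <;> exfalso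
  · exact (hW hr).not_nonLosingAs_other hr'.2
  · exact (hW hr).not_nonLosingAs_other (hr'.nonLosingAs hG)
  · exact hr'.not_nonLosingAs_other (hN hr.1)

lemma Result.val_le_of_lifts_R (hG : WellFormed G) (hW : WinsAs H s .R → WinsAs G s .R)
    (hN : NonLosingAs H s .R → NonLosingAs G s .R) {r r' : Result}
    (hr : resultIs G s r) (hr' : resultIs H s r') : r.val ≤ r'.val := by
  cases r <;> cases r' <;> simp only [Result.val] <;> (try omega) <;> exfalso
  · exact hr.not_nonLosingAs_other (hN hr'.2)
  · exact hr.not_nonLosingAs_other ((hW hr').nonLosingAs hG)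
  · exact (hW hr').not_nonLosingAs_other hr.1

lemma outLE_of_val_le (hle : ∀ s r r', resultIs G s r → resultIs H s r' → r.val ≤ r'.val) :
    ∀ o o' : Outcome, hasOutcome G o → hasOutcome H o' → outLE o o' :=
  fun _ _ ho ho' => ⟨hle .L _ _ ho.1 ho'.1, hle .R _ _ ho.2 ho'.2⟩

end Strategies

def strip (u v : ℕ) (h : List ℕ) : List ℕ := h.filter fun x => x ≠ u ∧ x ≠ v

section Strip

variable {u v x : ℕ} {h : List ℕ}

@[simp] lemma strip_nil (u v : ℕ) : strip u v [] = [] := rfl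

lemma mem_strip : x ∈ strip u v h ↔ x ∈ h ∧ x ≠ u ∧ x ≠ v := by simp [strip]

lemma strip_concat_of_mem (hx : x = u ∨ x = v) : strip u v (h ++ [x]) = strip u v h := by
  rcases hx with rfl | rfl <;> simp [strip]

lemma strip_concat_of_ne (hxu : x ≠ u) (hxv : x ≠ v) :
    strip u v (h ++ [x]) = strip u v h ++ [x] := by
  simp [strip, hxu, hxv]

lemma length_strip_of_iff (hnd : h.Nodup) (huv : u ≠ v) (hiff : u ∈ h ↔ v ∈ h) :
    (strip u v h).length = h.length ∨ (strip u v h).length + 2 = h.length := by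
  by_cases hu : u ∈ h
  · right
    have hv := hiff.mp hu
    have hset : (strip u v h).toFinset = (h.toFinset.erase u).erase v := by
      ext y; simp only [List.mem_toFinset, mem_strip, Finset.mem_erase]; tauto
    have h₁ := Finset.card_erase_add_one (List.mem_toFinset.mpr hu)
    have h₂ := Finset.card_erase_add_one (s := h.toFinset.erase u)
      (Finset.mem_erase.mpr ⟨huv.symm, List.mem_toFinset.mpr hv⟩)
    have hnds : (strip u v h).Nodup := hnd.filter _
    rw [← List.toFinset_card_of_nodup hnds, ← List.toFinset_card_of_nodup hnd, hset]
    omega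
  · left
    have hv : v ∉ h := hiff.not.mp hu
    congr 1
    exact List.filter_eq_self.mpr fun y hy => by
      simpa using ⟨fun hyu => hu (hyu ▸ hy), fun hyv => hv (hyv ▸ hy)⟩

lemma mover_length_strip (s : Player) (hnd : h.Nodup) (huv : u ≠ v) (hiff : u ∈ h ↔ v ∈ h) :
    mover s (strip u v h).length = mover s h.length := by
  rcases length_strip_of_iff hnd huv hiff with hl | hl
  · rw [hl]
  · rw [← hl, mover_add_two]

end Strip

def liftStrat (G : Game) (u v : ℕ) (τ : Strategy) : Strategy := fun h =>
  if u ∈ h ∧ v ∉ h then v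
  else if v ∈ h ∧ u ∉ h then u
  else if G.V ⊆ insert u (insert v h.toFinset) then u
  else τ (strip u v h)

section LiftStrat

variable {G : Game} {u v : ℕ} {τ : Strategy} {h : List ℕ}

lemma liftStrat_of_left_mem (hu : u ∈ h) (hv : v ∉ h) : liftStrat G u v τ h = v :=
  if_pos ⟨hu, hv⟩

lemma liftStrat_of_right_mem (hv : v ∈ h) (hu : u ∉ h) : liftStrat G u v τ h = u := by
  simp only [liftStrat, if_neg fun hc : u ∈ h ∧ v ∉ h => hu hc.1, if_pos (And.intro hv hu)]

lemma liftStrat_of_full (hiff : u ∈ h ↔ v ∈ h) (hfull : G.V ⊆ insert u (insert v h.toFinset)) :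
    liftStrat G u v τ h = u := by
  simp only [liftStrat, if_neg fun hc : u ∈ h ∧ v ∉ h => hc.2 (hiff.mp hc.1),
    if_neg fun hc : v ∈ h ∧ u ∉ h => hc.2 (hiff.mpr hc.1), if_pos hfull]

lemma liftStrat_of_not_full (hiff : u ∈ h ↔ v ∈ h)
    (hfull : ¬ G.V ⊆ insert u (insert v h.toFinset)) : liftStrat G u v τ h = τ (strip u v h) := by
  simp only [liftStrat, if_neg fun hc : u ∈ h ∧ v ∉ h => hc.2 (hiff.mp hc.1),
    if_neg fun hc : v ∈ h ∧ u ∉ h => hc.2 (hiff.mpr hc.1), if_neg hfull]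

end LiftStrat

/-- `H` stands for `G` after `p` has taken `u` and the opponent `v`. -/
structure IsPairReduction (G H : Game) (p : Player) (u v : ℕ) : Prop where
  left_mem : u ∈ G.V
  right_mem : v ∈ G.V
  ne : u ≠ v
  V_eq : H.V = (G.V.erase u).erase v
  edges_subset : H.edges p ⊆ G.edges p
  erase_mem_edges_other : ∀ e ∈ G.edges p.other, u ∉ e → e.erase v ∈ H.edges p.other
  dominates : ∀ e ∈ G.edges p.other, u ∈ e → v ∈ e

/-- How far the pairing on `{u, v}` has got along `h`: in `answer` the opponent has just taken
one of them, in `forced` the lifted player took `u` because nothing else was left. -/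
inductive PairState (G : Game) (s p : Player) (u v : ℕ) (h : List ℕ) : Prop
  | untouched : u ∉ h → v ∉ h → PairState G s p u v h
  | answer : (u ∈ h ↔ v ∉ h) → mover s h.length = p → PairState G s p u v h
  | forced : u ∈ picked s p h → v ∉ h → G.V ⊆ insert v h.toFinset → PairState G s p u v h
  | split : u ∈ h → v ∈ h → u ∈ picked s p h ∨ v ∈ picked s p h → PairState G s p u v h

structure LiftInv (G H : Game) (s p : Player) (u v : ℕ) (τ : Strategy) (h : List ℕ) : Prop where
  valid : ValidHist H s (strip u v h)
  follows : Follows s p τ (strip u v h)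
  picked_strip : ∀ r, picked s r (strip u v h) = picked s r h \ {u, v}
  state : PairState G s p u v h

section Lift

variable {G H : Game} {s p : Player} {u v x : ℕ} {τ : Strategy} {h : List ℕ}

lemma IsPairReduction.mem_V (R : IsPairReduction G H p u v) :
    x ∈ H.V ↔ x ∈ G.V ∧ x ≠ u ∧ x ≠ v := by
  rw [R.V_eq]; simp only [Finset.mem_erase]; tauto

lemma liftInv_nil : LiftInv G H s p u v τ [] :=
  ⟨validHist_nil H s, follows_nil s p τ, by simp, .untouched (by simp) (by simp)⟩

lemma PairState.not_mem_picked_other_both (hst : PairState G s p u v h) (hnd : h.Nodup) :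
    ¬ (u ∈ picked s p.other h ∧ v ∈ picked s p.other h) := by
  rintro ⟨hu, hv⟩
  cases hst with
  | untouched hu' _ => exact hu' (mem_of_mem_picked hu)
  | answer hiff _ => exact hiff.mp (mem_of_mem_picked hu) (mem_of_mem_picked hv)
  | forced _ hv' _ => exact hv' (mem_of_mem_picked hv)
  | split _ _ hown =>
    have hdisj := picked_disjoint (s := s) hnd (Player.other_ne p).symm
    rcases hown with hown | hown
    exacts [Finset.disjoint_left.mp hdisj hown hu, Finset.disjoint_left.mp hdisj hown hv]

lemma PairState.concat_of_ne (hst : PairState G s p u v h) (hval : ValidHist G s (h ++ [x]))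
    (hfol : Follows s p (liftStrat G u v τ) (h ++ [x])) (hxu : x ≠ u) (hxv : x ≠ v) :
    (u ∈ h ↔ v ∈ h) ∧ PairState G s p u v (h ++ [x]) := by
  obtain ⟨hxV, hxh⟩ := hval.mem_of_concat
  cases hst with
  | untouched hu hv =>
    exact ⟨iff_of_false hu hv, .untouched (by simp [hu, hxu.symm]) (by simp [hv, hxv.symm])⟩
  | answer hiff hturn =>
    have hxσ := hfol.eq_of_concat hturn
    by_cases hu : u ∈ h
    · exact absurd (hxσ.trans (liftStrat_of_left_mem hu (hiff.mp hu))) hxv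
    · exact absurd (hxσ.trans (liftStrat_of_right_mem (by tauto) hu)) hxu
  | forced _ _ hfull =>
    have := hfull hxV
    simp only [Finset.mem_insert, List.mem_toFinset] at this
    tauto
  | split hu hv hown =>
    have hmono := picked_subset_concat s p h x
    exact ⟨iff_of_true hu hv, .split (by simp [hu]) (by simp [hv]) (hown.imp (hmono ·) (hmono ·))⟩

lemma IsPairReduction.not_ended_strip (R : IsPairReduction G H p u v)
    (hτ : IsNonLosing H s p τ) (inv : LiftInv G H s p u v τ h) (hnend : ¬ ended G s h) :
    ¬ ended H s (strip u v h) := by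
  intro hend
  rcases (ended_iff H s _ p).mp hend with hf | hf
  · refine hnend ((ended_iff G s h p).mpr (Or.inl (hf.mono R.edges_subset ?_)))
    rw [inv.picked_strip p]
    exact Finset.sdiff_subset
  · exact hτ.2 _ inv.valid inv.follows (Or.inl hend) hf

lemma IsPairReduction.tau_strip_legal (R : IsPairReduction G H p u v) (hτ : IsNonLosing H s p τ)
    (inv : LiftInv G H s p u v τ h) (hval : ValidHist G s h) (hiff : u ∈ h ↔ v ∈ h)
    (hfree : ¬ G.V ⊆ insert u (insert v h.toFinset)) (hnend : ¬ ended G s h)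
    (hturn : mover s h.length = p) :
    τ (strip u v h) ∈ H.V ∧ τ (strip u v h) ∉ strip u v h := by
  obtain ⟨w, hwV, hw⟩ := Finset.not_subset.mp hfree
  simp only [Finset.mem_insert, List.mem_toFinset, not_or] at hw
  have hwH : w ∈ H.V := R.mem_V.mpr ⟨hwV, hw.1, hw.2.1⟩
  have hws : w ∉ strip u v h := fun hc => hw.2.2 (mem_strip.mp hc).1
  refine hτ.1 _ inv.valid inv.follows (R.not_ended_strip hτ inv hnend)
    (inv.valid.length_lt hwH hws) ?_
  rwa [mover_length_strip s hval.1 R.ne hiff]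

lemma IsPairReduction.pairState_concat_of_mem (R : IsPairReduction G H p u v)
    (hτ : IsNonLosing H s p τ) (inv : LiftInv G H s p u v τ h)
    (hval : ValidHist G s (h ++ [x])) (hfol : Follows s p (liftStrat G u v τ) (h ++ [x]))
    (hx : x = u ∨ x = v) : PairState G s p u v (h ++ [x]) := by
  have hxh := hval.mem_of_concat.2
  cases inv.state with
  | untouched hu hv =>
    rcases Player.eq_or_eq_other (mover s h.length) p with hturn | hturn
    · have hxσ := hfol.eq_of_concat hturn
      by_cases hfull : G.V ⊆ insert u (insert v h.toFinset)
      · rw [hxσ, liftStrat_of_full (iff_of_false hu hv) hfull]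
        refine .forced (mem_picked_concat_self hturn) (by simp [hv, R.ne.symm]) fun y hy => ?_
        have := hfull hy
        simp only [Finset.mem_insert, List.mem_toFinset, List.mem_append,
          List.mem_singleton] at this ⊢
        tauto
      · rw [liftStrat_of_not_full (iff_of_false hu hv) hfull] at hxσ
        have hτH := (R.tau_strip_legal hτ inv hval.of_concat (iff_of_false hu hv) hfull
          hval.not_ended_of_concat hturn).1
        rw [← hxσ, R.mem_V] at hτH
        rcases hx with hx | hx
        exacts [absurd hx hτH.2.1, absurd hx hτH.2.2]
    · refine .answer ?_ (mover_concat_length x hturn)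
      rcases hx with rfl | rfl <;> simp [hu, hv, R.ne, R.ne.symm]
  | answer hiff hturn =>
    have hxσ := hfol.eq_of_concat hturn
    by_cases hu : u ∈ h
    · rw [hxσ, liftStrat_of_left_mem hu (hiff.mp hu)]
      exact .split (by simp [hu]) (by simp) (Or.inr (mem_picked_concat_self hturn))
    · have hv : v ∈ h := by tauto
      rw [hxσ, liftStrat_of_right_mem hv hu]
      exact .split (by simp) (by simp [hv]) (Or.inl (mem_picked_concat_self hturn))
  | forced hu _ _ =>
    have hu' := mem_of_mem_picked hu
    rw [hx.resolve_left fun hxu => hxh (hxu ▸ hu')]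
    exact .split (by simp [hu']) (by simp) (Or.inl (picked_subset_concat s p h v hu))
  | split hu hv _ =>
    rcases hx with rfl | rfl
    exacts [absurd hu hxh, absurd hv hxh]

lemma IsPairReduction.liftInv_concat_of_mem (R : IsPairReduction G H p u v)
    (hτ : IsNonLosing H s p τ) (inv : LiftInv G H s p u v τ h)
    (hval : ValidHist G s (h ++ [x])) (hfol : Follows s p (liftStrat G u v τ) (h ++ [x]))
    (hx : x = u ∨ x = v) : LiftInv G H s p u v τ (h ++ [x]) := by
  have hxuv : x ∈ ({u, v} : Finset ℕ) := by rcases hx with rfl | rfl <;> simp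
  refine ⟨?_, ?_, fun r => ?_, R.pairState_concat_of_mem hτ inv hval hfol hx⟩ <;>
    rw [strip_concat_of_mem hx]
  · exact inv.valid
  · exact inv.follows
  · rw [picked_concat, inv.picked_strip r]
    split_ifs
    exacts [(Finset.insert_sdiff_of_mem _ hxuv).symm, rfl]

lemma IsPairReduction.liftInv_concat_of_ne (R : IsPairReduction G H p u v)
    (hτ : IsNonLosing H s p τ) (inv : LiftInv G H s p u v τ h)
    (hval : ValidHist G s (h ++ [x])) (hfol : Follows s p (liftStrat G u v τ) (h ++ [x]))
    (hxu : x ≠ u) (hxv : x ≠ v) : LiftInv G H s p u v τ (h ++ [x]) := by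
  obtain ⟨hiff, hstate⟩ := inv.state.concat_of_ne hval hfol hxu hxv
  obtain ⟨hxV, hxh⟩ := hval.mem_of_concat
  have hparity := mover_length_strip s hval.of_concat.1 R.ne hiff
  have hfree : ¬ G.V ⊆ insert u (insert v h.toFinset) := fun hfull => by
    have := hfull hxV
    simp only [Finset.mem_insert, List.mem_toFinset] at this
    tauto
  refine ⟨?_, ?_, fun r => ?_, hstate⟩ <;> rw [strip_concat_of_ne hxu hxv]
  · exact inv.valid.concat (R.not_ended_strip hτ inv hval.not_ended_of_concat)
      (R.mem_V.mpr ⟨hxV, hxu, hxv⟩) fun hc => hxh (mem_strip.mp hc).1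
  · exact inv.follows.concat fun hturn =>
      (hfol.eq_of_concat (hparity ▸ hturn)).trans (liftStrat_of_not_full hiff hfree)
  · rw [picked_concat, picked_concat, hparity, inv.picked_strip r]
    split_ifs
    exacts [(Finset.insert_sdiff_of_notMem _ (by simp [hxu, hxv] : x ∉ ({u, v} : Finset ℕ))).symm,
      rfl]

lemma IsPairReduction.liftInv (R : IsPairReduction G H p u v) (hτ : IsNonLosing H s p τ)
    (hval : ValidHist G s h) (hfol : Follows s p (liftStrat G u v τ) h) :
    LiftInv G H s p u v τ h := by
  induction h using List.reverseRecOn with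
  | nil => exact liftInv_nil
  | append_singleton h x ih =>
    have inv := ih hval.of_concat hfol.of_concat
    by_cases hx : x = u ∨ x = v
    · exact R.liftInv_concat_of_mem hτ inv hval hfol hx
    · rw [not_or] at hx
      exact R.liftInv_concat_of_ne hτ inv hval hfol hx.1 hx.2

lemma IsPairReduction.liftStrat_legal (R : IsPairReduction G H p u v)
    (hτ : IsNonLosing H s p τ) : Legal G s p (liftStrat G u v τ) := by
  intro h hval hfol hnend hlt hturn
  by_cases h₁ : u ∈ h ∧ v ∉ h
  · rw [liftStrat_of_left_mem h₁.1 h₁.2]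
    exact ⟨R.right_mem, h₁.2⟩
  by_cases h₂ : v ∈ h ∧ u ∉ h
  · rw [liftStrat_of_right_mem h₂.1 h₂.2]
    exact ⟨R.left_mem, h₂.2⟩
  have hiff : u ∈ h ↔ v ∈ h := by tauto
  by_cases hfull : G.V ⊆ insert u (insert v h.toFinset)
  · rw [liftStrat_of_full hiff hfull]
    refine ⟨R.left_mem, fun hu => ?_⟩
    have hcov : G.V ⊆ h.toFinset := fun y hy => by
      have := hfull hy
      simp only [Finset.mem_insert, List.mem_toFinset] at this ⊢
      rcases this with rfl | rfl | hy
      exacts [hu, hiff.mp hu, hy]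
    have := Finset.card_le_card hcov
    rw [List.toFinset_card_of_nodup hval.1] at this
    omega
  · rw [liftStrat_of_not_full hiff hfull]
    have inv := R.liftInv hτ hval hfol
    obtain ⟨hτH, hτh⟩ := R.tau_strip_legal hτ inv hval hiff hfull hnend hturn
    obtain ⟨hτG, hτu, hτv⟩ := R.mem_V.mp hτH
    exact ⟨hτG, fun hc => hτh (mem_strip.mpr ⟨hc, hτu, hτv⟩)⟩

lemma IsPairReduction.liftStrat_not_fills_other (R : IsPairReduction G H p u v)
    (hτ : IsNonLosing H s p τ) (hval : ValidHist G s h)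
    (hfol : Follows s p (liftStrat G u v τ) h) :
    ¬ fills (G.edges p.other) (picked s p.other h) := by
  rintro ⟨e, he, hes⟩
  have inv := R.liftInv hτ hval hfol
  have hue : u ∉ e := fun hue =>
    inv.state.not_mem_picked_other_both hval.1 ⟨hes hue, hes (R.dominates e he hue)⟩
  have hfillH : fills (H.edges p.other) (picked s p.other (strip u v h)) := by
    refine ⟨e.erase v, R.erase_mem_edges_other e he hue, fun y hy => ?_⟩
    obtain ⟨hyv, hye⟩ := Finset.mem_erase.mp hy
    rw [inv.picked_strip]
    exact Finset.mem_sdiff.mpr ⟨hes hye, by simp [hyv, ne_of_mem_of_not_mem hye hue]⟩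
  exact hτ.2 _ inv.valid inv.follows (Or.inl ((ended_iff H s _ p).mpr (Or.inr hfillH))) hfillH

lemma IsPairReduction.liftStrat_isNonLosing (R : IsPairReduction G H p u v)
    (hτ : IsNonLosing H s p τ) : IsNonLosing G s p (liftStrat G u v τ) :=
  ⟨R.liftStrat_legal hτ, fun _ hval hfol _ => R.liftStrat_not_fills_other hτ hval hfol⟩

lemma IsPairReduction.liftStrat_isWinning (R : IsPairReduction G H p u v) (hH : WellFormed H)
    (hτ : IsWinning H s p τ) : IsWinning G s p (liftStrat G u v τ) := by
  have hτ' := hτ.isNonLosing hH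
  refine ⟨R.liftStrat_legal hτ', fun h hval hfol hc => ?_⟩
  rcases hc with hend | hfull
  · exact ((ended_iff G s h p).mp hend).resolve_right (R.liftStrat_not_fills_other hτ' hval hfol)
  have inv := R.liftInv hτ' hval hfol
  have hcov : (strip u v h).toFinset = H.V := by
    ext y
    rw [List.mem_toFinset, mem_strip, ← List.mem_toFinset, hval.toFinset_eq hfull, R.mem_V]
  have hcH : Complete H s (strip u v h) :=
    Or.inr (by rw [← hcov, List.toFinset_card_of_nodup inv.valid.1])
  refine (hτ.2 _ inv.valid inv.follows hcH).mono R.edges_subset ?_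
  rw [inv.picked_strip]
  exact Finset.sdiff_subset

lemma IsPairReduction.nonLosingAs (R : IsPairReduction G H p u v) :
    NonLosingAs H s p → NonLosingAs G s p :=
  fun ⟨_, hτ⟩ => ⟨_, R.liftStrat_isNonLosing hτ⟩

lemma IsPairReduction.winsAs (R : IsPairReduction G H p u v) (hH : WellFormed H) :
    WinsAs H s p → WinsAs G s p :=
  fun ⟨_, hτ⟩ => ⟨_, R.liftStrat_isWinning hH hτ⟩

end Lift

section Update

variable {G : Game} {E : Finset (Finset ℕ)} {a b u v : ℕ}

lemma singleton_notMem_of_dominates (huv : u ≠ v) (hdom : ∀ e ∈ E, u ∈ e → v ∈ e) :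
    ({u} : Finset ℕ) ∉ E := fun hu =>
  huv (Finset.mem_singleton.mp (hdom _ hu (Finset.mem_singleton_self u))).symm

lemma image_erase_filter_subset (hdom : ∀ e ∈ E, u ∈ e → v ∈ e) :
    (E.filter fun e => v ∉ e).image (fun e => e.erase u) ⊆ E := by
  rintro _ he
  obtain ⟨e, he', rfl⟩ := Finset.mem_image.mp he
  obtain ⟨heE, hve⟩ := Finset.mem_filter.mp he'
  rwa [Finset.erase_eq_of_notMem fun hue => hve (hdom e heE hue)]

lemma edges_image_erase_filter {V : Finset ℕ} (hE : ∀ e ∈ E, e ⊆ V ∧ e.Nonempty)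
    (ha : ({a} : Finset ℕ) ∉ E) :
    ∀ e ∈ (E.filter fun e => b ∉ e).image (fun e => e.erase a),
      e ⊆ (V.erase a).erase b ∧ e.Nonempty := by
  rintro _ he
  obtain ⟨e, he', rfl⟩ := Finset.mem_image.mp he
  obtain ⟨heE, hbe⟩ := Finset.mem_filter.mp he'
  obtain ⟨hsub, hne⟩ := hE e heE
  refine ⟨fun x hx => ?_, ?_⟩
  · obtain ⟨hxa, hxe⟩ := Finset.mem_erase.mp hx
    exact Finset.mem_erase.mpr ⟨ne_of_mem_of_not_mem hxe hbe, Finset.mem_erase.mpr ⟨hxa, hsub hxe⟩⟩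
  · rw [Finset.nonempty_iff_ne_empty, Ne, Finset.erase_eq_empty_iff]
    rintro (rfl | rfl)
    exacts [hne.ne_empty rfl, ha heE]

lemma updLR_wellFormed (hG : WellFormed G) (ha : ({a} : Finset ℕ) ∉ G.EL)
    (hb : ({b} : Finset ℕ) ∉ G.ER) : WellFormed (updLR G a b) := by
  refine ⟨edges_image_erase_filter hG.1 ha, fun e he => ?_⟩
  rw [updLR, Finset.erase_right_comm]
  exact edges_image_erase_filter hG.2 hb e he

lemma isPairReduction_updLR_L (hu : u ∈ G.V) (hv : v ∈ G.V) (huv : u ≠ v)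
    (hdomL : ∀ e ∈ G.EL, u ∈ e → v ∈ e) (hdomR : ∀ e ∈ G.ER, u ∈ e → v ∈ e) :
    IsPairReduction G (updLR G u v) .L u v :=
  ⟨hu, hv, huv, rfl, image_erase_filter_subset hdomL,
    fun _ he hue => Finset.mem_image_of_mem _ (Finset.mem_filter.mpr ⟨he, hue⟩), hdomR⟩

lemma isPairReduction_updLR_R (hu : u ∈ G.V) (hv : v ∈ G.V) (huv : u ≠ v)
    (hdomL : ∀ e ∈ G.EL, u ∈ e → v ∈ e) (hdomR : ∀ e ∈ G.ER, u ∈ e → v ∈ e) :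
    IsPairReduction G (updLR G v u) .R u v :=
  ⟨hu, hv, huv, Finset.erase_right_comm, image_erase_filter_subset hdomR,
    fun _ he hue => Finset.mem_image_of_mem _ (Finset.mem_filter.mpr ⟨he, hue⟩), hdomL⟩

end Update

theorem dominating_option_iii_general (G : Game) (hG : WellFormed G) (u v : ℕ)
    (hu : u ∈ G.V) (hv : v ∈ G.V) (huv : u ≠ v)
    (hsv : ({v} : Finset ℕ) ∉ G.EL ∪ G.ER)
    (hdom : ∀ e ∈ G.EL ∪ G.ER, u ∈ e → v ∈ e) :
    (∀ o o' : Outcome, hasOutcome (updLR G u v) o → hasOutcome G o' → outLE o o') ∧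
    (∀ o o' : Outcome, hasOutcome G o → hasOutcome (updLR G v u) o' → outLE o o') := by
  have hdomL : ∀ e ∈ G.EL, u ∈ e → v ∈ e := fun e he => hdom e (Finset.mem_union_left _ he)
  have hdomR : ∀ e ∈ G.ER, u ∈ e → v ∈ e := fun e he => hdom e (Finset.mem_union_right _ he)
  have R₁ := isPairReduction_updLR_L hu hv huv hdomL hdomR
  have R₂ := isPairReduction_updLR_R hu hv huv hdomL hdomR
  have hwf₁ : WellFormed (updLR G u v) := updLR_wellFormed hG
    (singleton_notMem_of_dominates huv hdomL) fun h => hsv (Finset.mem_union_right _ h)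
  have hwf₂ : WellFormed (updLR G v u) := updLR_wellFormed hG
    (fun h => hsv (Finset.mem_union_left _ h)) (singleton_notMem_of_dominates huv hdomR)
  exact ⟨outLE_of_val_le fun _ _ _ =>
      Result.val_le_of_lifts_L hG (R₁.winsAs hwf₁) R₁.nonLosingAs,
    outLE_of_val_le fun _ _ _ => Result.val_le_of_lifts_R hG (R₂.winsAs hwf₂) R₂.nonLosingAs⟩

/-- Dominating option, part (iii): if every edge containing `u` also contains `v`,
then `o(G_u^v) ≤_L o(G) ≤_L o(G_v^u)`. -/
theorem dominating_option_iii (G : Game) (hG : WellFormed G) (u v : ℕ)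
    (hu : u ∈ G.V) (hv : v ∈ G.V) (huv : u ≠ v)
    (hsu : ({u} : Finset ℕ) ∉ G.EL ∪ G.ER) (hsv : ({v} : Finset ℕ) ∉ G.EL ∪ G.ER)
    (hdom : ∀ e ∈ G.EL ∪ G.ER, u ∈ e → v ∈ e) :
    (∀ o o' : Outcome, hasOutcome (updLR G u v) o → hasOutcome G o' → outLE o o') ∧
    (∀ o o' : Outcome, hasOutcome G o → hasOutcome (updLR G v u) o' → outLE o o') :=
  dominating_option_iii_general G hG u v hu hv huv hsv hdom

end APG
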